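/- arXiv:2004.14872 — 5 statements merged into one kernel-verified Lean document; each statement's English description precedes it below -/
import Mathlib

section
/- Let V be a finite-dimensional complex inner product space, G a group acting linearly on V preserving a subspace structure such that the invariant subspaces satisfy (V^{⊗k})^G ⊗ (V^{⊗l})^G ⊆ (V^{⊗(k+l)})^G, and let Π_k denote the orthogonal projection of V^{⊗k} onto the G-invariant subspace. Then for all v ∈ V and all k, l ∈ ℕ, ‖Π_{k+l}(v^{⊗(k+l)})‖ ≥ ‖Π_k(v^{⊗k})‖ · ‖Π_l(v^{⊗l})‖. -/
open scoped InnerProductSpace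

/-! Let `p`, `q` be the projections of `v^{⊗k}`, `v^{⊗l}` onto the invariant subspaces. Then
`p ⊗ q` is invariant, `‖p ⊗ q‖ = ‖p‖ ‖q‖`, and `⟪p ⊗ q, v^{⊗(k+l)}⟫ = ⟪p, v^{⊗k}⟫ ⟪q, v^{⊗l}⟫`
`= ‖p‖² ‖q‖²`. Since `p ⊗ q` lies in the invariant subspace, this inner product only sees the
projection of `v^{⊗(k+l)}`, and Cauchy–Schwarz gives `‖p ⊗ q‖ ≤ ‖Π_{k+l} v^{⊗(k+l)}‖`. -/

/-- The `k`-th tensor power `v^{⊗k}` of a vector `v ∈ ℂⁿ`, realized concretely as the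
vector in `EuclideanSpace ℂ (Fin k → Fin n)` with entries `∏ i, v (f i)`. -/
noncomputable def tpow {n : ℕ} (v : EuclideanSpace ℂ (Fin n)) (k : ℕ) :
    EuclideanSpace ℂ (Fin k → Fin n) :=
  (WithLp.equiv 2 ((Fin k → Fin n) → ℂ)).symm fun f => ∏ i, v (f i)

/-- The `k`-th tensor power of a matrix `A`, acting on the tensor power space. -/
noncomputable def tensMap {n : ℕ} (k : ℕ) (A : Matrix (Fin n) (Fin n) ℂ) :
    EuclideanSpace ℂ (Fin k → Fin n) →ₗ[ℂ] EuclideanSpace ℂ (Fin k → Fin n) :=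
  Matrix.toEuclideanLin (fun f f' => ∏ i, A (f i) (f' i))

/-- The subspace of `G`-invariant tensors in `V^{⊗k}`, for a representation
`ρ : G →* GL(n, ℂ)`. -/
noncomputable def invSub {G : Type*} [Group G] {n : ℕ}
    (ρ : G →* (Matrix (Fin n) (Fin n) ℂ)ˣ) (k : ℕ) :
    Submodule ℂ (EuclideanSpace ℂ (Fin k → Fin n)) :=
  ⨅ g : G, LinearMap.ker (tensMap k (ρ g : Matrix (Fin n) (Fin n) ℂ) - LinearMap.id)

/-- The tensor product of a tensor in `V^{⊗k}` and a tensor in `V^{⊗l}`,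
as a tensor in `V^{⊗(k+l)}`. -/
noncomputable def tmul {n k l : ℕ} (w : EuclideanSpace ℂ (Fin k → Fin n))
    (w' : EuclideanSpace ℂ (Fin l → Fin n)) :
    EuclideanSpace ℂ (Fin (k + l) → Fin n) :=
  (WithLp.equiv 2 ((Fin (k + l) → Fin n) → ℂ)).symm
    fun f => w (fun i => f (Fin.castAdd l i)) * w' (fun i => f (Fin.natAdd k i))

namespace Submodule

variable {𝕜 E : Type*} [RCLike 𝕜] [NormedAddCommGroup E] [InnerProductSpace 𝕜 E]
  (K : Submodule 𝕜 E) [K.HasOrthogonalProjection]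

theorem norm_inner_le_norm_mul_norm_orthogonalProjectionOnto {u : E} (hu : u ∈ K) (x : E) :
    ‖⟪u, x⟫_𝕜‖ ≤ ‖u‖ * ‖K.orthogonalProjectionOnto x‖ := by
  rw [← K.inner_orthogonalProjectionOnto_eq_of_mem_left ⟨u, hu⟩]
  exact norm_inner_le_norm _ _

theorem norm_le_norm_orthogonalProjectionOnto_of_inner_eq {u x : E} (hu : u ∈ K)
    (h : ⟪u, x⟫_𝕜 = (‖u‖ : 𝕜) ^ 2) : ‖u‖ ≤ ‖K.orthogonalProjectionOnto x‖ := by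
  have hle := K.norm_inner_le_norm_mul_norm_orthogonalProjectionOnto hu x
  rw [h, norm_pow, RCLike.norm_ofReal, abs_norm, sq] at hle
  rcases (norm_nonneg u).eq_or_lt with hu0 | hu0
  · exact hu0 ▸ norm_nonneg _
  · exact le_of_mul_le_mul_left hle hu0

theorem inner_orthogonalProjectionOnto_left_self (x : E) :
    ⟪(K.orthogonalProjectionOnto x : E), x⟫_𝕜 = (‖(K.orthogonalProjectionOnto x : E)‖ : 𝕜) ^ 2 :=
  (K.inner_orthogonalProjectionOnto_eq_of_mem_left _ x).symm.trans (inner_self_eq_norm_sq_to_K _)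

end Submodule

theorem inner_tmul {n k l : ℕ} (a c : EuclideanSpace ℂ (Fin k → Fin n))
    (b d : EuclideanSpace ℂ (Fin l → Fin n)) :
    ⟪tmul a b, tmul c d⟫_ℂ = ⟪a, c⟫_ℂ * ⟪b, d⟫_ℂ := by
  simp only [PiLp.inner_apply, tmul, WithLp.equiv_symm_apply, RCLike.inner_apply]
  rw [← (Fin.appendEquiv k l).sum_comp, Fintype.sum_prod_type, Finset.sum_mul_sum]
  refine Finset.sum_congr rfl fun f _ => Finset.sum_congr rfl fun f' _ => ?_
  simp only [Fin.appendEquiv_apply, Fin.append_left, Fin.append_right, map_mul]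
  ring

theorem norm_tmul {n k l : ℕ} (w : EuclideanSpace ℂ (Fin k → Fin n))
    (w' : EuclideanSpace ℂ (Fin l → Fin n)) : ‖tmul w w'‖ = ‖w‖ * ‖w'‖ := by
  have h := inner_tmul w w w' w'
  simp only [inner_self_eq_norm_sq_to_K] at h
  rw [← pow_left_inj₀ (norm_nonneg _) (by positivity) two_ne_zero, mul_pow]
  exact_mod_cast h

theorem tmul_tpow {n : ℕ} (v : EuclideanSpace ℂ (Fin n)) (k l : ℕ) :
    tmul (tpow v k) (tpow v l) = tpow v (k + l) := by
  ext f
  simp [tmul, tpow, Fin.prod_univ_add]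

theorem norm_orthogonalProjectionOnto_tpow_mul_le {n k l : ℕ}
    (K : Submodule ℂ (EuclideanSpace ℂ (Fin k → Fin n)))
    (L : Submodule ℂ (EuclideanSpace ℂ (Fin l → Fin n)))
    (M : Submodule ℂ (EuclideanSpace ℂ (Fin (k + l) → Fin n)))
    (hKLM : ∀ w w', w ∈ K → w' ∈ L → tmul w w' ∈ M) (v : EuclideanSpace ℂ (Fin n)) :
    ‖K.orthogonalProjectionOnto (tpow v k)‖ * ‖L.orthogonalProjectionOnto (tpow v l)‖ ≤
      ‖M.orthogonalProjectionOnto (tpow v (k + l))‖ := by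
  set p : EuclideanSpace ℂ (Fin k → Fin n) := ↑(K.orthogonalProjectionOnto (tpow v k)) with hp
  set q : EuclideanSpace ℂ (Fin l → Fin n) := ↑(L.orthogonalProjectionOnto (tpow v l)) with hq
  have hpq : ⟪tmul p q, tpow v (k + l)⟫_ℂ = (‖tmul p q‖ : ℂ) ^ 2 := by
    rw [← tmul_tpow, inner_tmul, K.inner_orthogonalProjectionOnto_left_self,
      L.inner_orthogonalProjectionOnto_left_self, ← hp, ← hq, norm_tmul,
      RCLike.ofReal_eq_complex_ofReal]
    push_cast
    ring
  calc ‖K.orthogonalProjectionOnto (tpow v k)‖ * ‖L.orthogonalProjectionOnto (tpow v l)‖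
      = ‖tmul p q‖ := (norm_tmul p q).symm
    _ ≤ _ := M.norm_le_norm_orthogonalProjectionOnto_of_inner_eq
      (hKLM p q (K.orthogonalProjectionOnto _).2 (L.orthogonalProjectionOnto _).2) hpq

/-- If the invariant subspaces satisfy
`(V^{⊗k})^G ⊗ (V^{⊗l})^G ⊆ (V^{⊗(k+l)})^G`, then the norms of the projections of the
tensor powers of `v` onto the invariant subspaces are supermultiplicative. -/
theorem stmt_0 {G : Type*} [Group G] {n : ℕ}
    (ρ : G →* (Matrix (Fin n) (Fin n) ℂ)ˣ)
    (hsub : ∀ (k l : ℕ) (w : EuclideanSpace ℂ (Fin k → Fin n))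
      (w' : EuclideanSpace ℂ (Fin l → Fin n)),
      w ∈ invSub ρ k → w' ∈ invSub ρ l → tmul w w' ∈ invSub ρ (k + l))
    (v : EuclideanSpace ℂ (Fin n)) (k l : ℕ) :
    ‖Submodule.orthogonalProjectionOnto (invSub ρ k) (tpow v k)‖ *
      ‖Submodule.orthogonalProjectionOnto (invSub ρ l) (tpow v l)‖ ≤
    ‖Submodule.orthogonalProjectionOnto (invSub ρ (k + l)) (tpow v (k + l))‖ :=
  norm_orthogonalProjectionOnto_tpow_mul_le _ _ _ (hsub k l) v
end

section
/- Let Ω be a finite subset of ℝ^n, let q : Ω → ℝ_{≥0} be a probability mass function, and for θ ∈ ℝ^n define F(θ) = sup_{x ∈ ℝ^n} (θ·x - log Σ_{ω∈Ω} e^{x·ω} q_ω). Then F(θ) = min { D_KL(p‖q) : p a probability mass function on Ω with Σ_ω p_ω ω = θ }, where the minimum is over probability distributions p on Ω with mean θ (and F(θ) = +∞ if no such p with p absolutely continuous w.r.t. q exists). -/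
open scoped BigOperators

/-- Kullback–Leibler divergence of two pmfs on a finite set `Ω ⊆ ℝ^n`, with values in the
extended reals: the conventions are `0 log 0 = 0` and `p_ω log(p_ω/0) = +∞` for `p_ω > 0`. -/
noncomputable def klDiv {n : ℕ} (Ω : Finset (Fin n → ℝ)) (p q : (Fin n → ℝ) → ℝ) : EReal :=
  ∑ ω ∈ Ω, (if p ω = 0 then (0 : EReal) else
    if q ω = 0 then (⊤ : EReal) else ((p ω * Real.log (p ω / q ω) : ℝ) : EReal))

/-!
Gibbs' variational inequality `∑ p f - log ∑ e^f q ≤ D(p‖q)`, applied to `f ω = x ⬝ᵥ ω`, gives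
`F(θ) ≤ D(p‖q)` for every `p` with mean `θ`. Conversely, let `F(θ) = r < ∞`. For `ε > 0` the
penalised objective `θ ⬝ᵥ x - log Z(x) - ε/2 * x ⬝ᵥ x`, with `Z(x) = ∑ e^{x ⬝ᵥ ω} q ω`, is
coercive, so it has a maximiser `x`; its first-order condition says that the tilted law
`p ∝ e^{x ⬝ᵥ ω} q` has mean `θ - ε • x`, whence
`D(p‖q) = θ ⬝ᵥ x - log Z(x) - ε * x ⬝ᵥ x ≤ r` and `|θ - mean p|² ≤ 2εr`. A minimiser of
`|θ - mean p|²` over the compact set of laws `p ≪ q` with `D(p‖q) ≤ r` thus has mean exactly `θ`.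
-/

open Finset Real Filter Topology

theorem EReal.coe_finset_sum {α : Type*} (s : Finset α) (f : α → ℝ) :
    ((∑ a ∈ s, f a : ℝ) : EReal) = ∑ a ∈ s, (f a : EReal) :=
  map_sum (⟨⟨Real.toEReal, EReal.coe_zero⟩, EReal.coe_add⟩ : ℝ →+ EReal) f s

theorem EReal.finset_sum_ne_bot {α : Type*} {s : Finset α} {f : α → EReal}
    (h : ∀ a ∈ s, f a ≠ ⊥) : ∑ a ∈ s, f a ≠ ⊥ := fun hbot ↦ by
  obtain ⟨a, ha, hfa⟩ := (WithBot.sum_eq_bot_iff (M := WithTop ℝ)).1 hbot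
  exact h a ha hfa

theorem Real.sub_le_mul_log_div {p c : ℝ} (hp : 0 ≤ p) (hc : 0 < c) :
    p - c ≤ p * log (p / c) := by
  have h := self_sub_one_le_mul_log (div_nonneg hp hc.le)
  have h' := mul_le_mul_of_nonneg_left h hc.le
  field_simp at h'
  linarith

theorem Real.continuous_mul_log_div (c : ℝ) : Continuous fun x ↦ x * log (x / c) := by
  have h : (fun x ↦ x * log (x / c)) = fun x ↦ c * (x / c * log (x / c)) := by
    rcases eq_or_ne c 0 with rfl | hc
    · simp
    · funext x; field_simp
  rw [h]
  exact continuous_const.mul (continuous_mul_log.comp (continuous_id.div_const c))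

section Tilting

variable {α : Type*} (s : Finset α) (q : α → ℝ)

noncomputable def partitionFn (f : α → ℝ) : ℝ := ∑ a ∈ s, exp (f a) * q a

open Classical in
noncomputable def tilt (f : α → ℝ) (a : α) : ℝ :=
  if a ∈ s then exp (f a) * q a / partitionFn s q f else 0

/-- This is `D(p‖q)` only when `p ≪ q` on `s`: otherwise the junk value `log (x / 0) = 0`
enters. -/
noncomputable def relEntropy (p q : α → ℝ) : ℝ := ∑ a ∈ s, p a * log (p a / q a)

def dominatedSimplex : Set (α → ℝ) :=
  {p | (∀ a, 0 ≤ p a) ∧ (∀ a ∉ s, p a = 0) ∧ ∑ a ∈ s, p a = 1 ∧ ∀ a ∈ s, q a = 0 → p a = 0}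

variable {s q}

theorem partitionFn_pos (hq0 : ∀ a, 0 ≤ q a) {a : α} (ha : a ∈ s) (hqa : 0 < q a)
    (f : α → ℝ) : 0 < partitionFn s q f :=
  sum_pos' (fun b _ ↦ mul_nonneg (exp_pos _).le (hq0 b)) ⟨a, ha, mul_pos (exp_pos _) hqa⟩

theorem partitionFn_pos_of_sum_eq_one (hq0 : ∀ a, 0 ≤ q a) (hq1 : ∑ a ∈ s, q a = 1)
    (f : α → ℝ) : 0 < partitionFn s q f := by
  obtain ⟨a, ha, hqa⟩ := exists_lt_of_sum_lt (f := 0) (by rw [hq1]; simp)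
  exact partitionFn_pos hq0 ha hqa f

theorem sum_mul_sub_log_partitionFn_le_relEntropy (hq0 : ∀ a, 0 ≤ q a) {p : α → ℝ}
    (hp : p ∈ dominatedSimplex s q) (f : α → ℝ) :
    ∑ a ∈ s, p a * f a - log (partitionFn s q f) ≤ relEntropy s p q := by
  obtain ⟨b, hb, hpb⟩ := exists_lt_of_sum_lt (f := 0) (s := s) (g := p) (by rw [hp.2.2.1]; simp)
  have hZ := partitionFn_pos hq0 hb
    ((hq0 b).lt_of_ne' fun hqb ↦ hpb.ne' (hp.2.2.2 b hb hqb)) f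
  set Z := partitionFn s q f
  have key : ∀ a ∈ s, p a - exp (f a) * q a / Z
      ≤ p a * log (p a / q a) - p a * f a + p a * log Z := by
    intro a ha
    rcases (hp.1 a).eq_or_lt with hpa | hpa
    · rw [← hpa]; simp only [zero_sub, zero_mul, sub_zero, add_zero, neg_nonpos]
      exact div_nonneg (mul_nonneg (exp_pos _).le (hq0 a)) hZ.le
    have hqa : 0 < q a := (hq0 a).lt_of_ne' fun hqa ↦ hpa.ne' (hp.2.2.2 a ha hqa)
    have hc : 0 < exp (f a) * q a / Z := by positivity
    calc p a - exp (f a) * q a / Z ≤ p a * log (p a / (exp (f a) * q a / Z)) :=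
          sub_le_mul_log_div hpa.le hc
      _ = _ := by
          rw [div_div_eq_mul_div, log_div (by positivity) (by positivity),
            log_mul hpa.ne' hZ.ne', log_mul (exp_pos _).ne' hqa.ne', log_div hpa.ne' hqa.ne',
            log_exp]
          ring
  have hsum := sum_le_sum key
  have hZ1 : ∑ a ∈ s, exp (f a) * q a / Z = 1 := by rw [← sum_div]; exact div_self hZ.ne'
  rw [sum_sub_distrib, hZ1, sum_add_distrib, sum_sub_distrib, ← sum_mul, hp.2.2.1] at hsum
  unfold relEntropy
  linarith

theorem sum_tilt_mul {f : α → ℝ} (g : α → ℝ) :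
    ∑ a ∈ s, tilt s q f a * g a = (∑ a ∈ s, exp (f a) * q a * g a) / partitionFn s q f := by
  rw [sum_div]
  refine sum_congr rfl fun a ha ↦ ?_
  rw [tilt, if_pos ha, div_mul_eq_mul_div]

theorem sum_tilt {f : α → ℝ} (hZ : partitionFn s q f ≠ 0) : ∑ a ∈ s, tilt s q f a = 1 := by
  have h := sum_tilt_mul (s := s) (q := q) (f := f) 1
  simp only [Pi.one_apply, mul_one] at h
  exact h.trans (div_self hZ)

theorem tilt_mem_dominatedSimplex (hq0 : ∀ a, 0 ≤ q a) {f : α → ℝ}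
    (hZ : 0 < partitionFn s q f) : tilt s q f ∈ dominatedSimplex s q := by
  refine ⟨fun a ↦ ?_, fun a ha ↦ if_neg ha, ?_, fun a ha hqa ↦ by simp [tilt, hqa]⟩
  · unfold tilt; split_ifs
    · exact div_nonneg (mul_nonneg (exp_pos _).le (hq0 a)) hZ.le
    · exact le_rfl
  · exact sum_tilt hZ.ne'

theorem relEntropy_tilt {f : α → ℝ} (hZ : 0 < partitionFn s q f) :
    relEntropy s (tilt s q f) q = ∑ a ∈ s, tilt s q f a * f a - log (partitionFn s q f) := by
  have hterm : ∀ a ∈ s, tilt s q f a * log (tilt s q f a / q a)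
      = tilt s q f a * f a - tilt s q f a * log (partitionFn s q f) := by
    intro a ha
    rcases eq_or_ne (q a) 0 with hqa | hqa
    · simp [tilt, hqa]
    rw [tilt, if_pos ha, mul_div_right_comm, mul_div_cancel_right₀ _ hqa,
      log_div (exp_pos _).ne' hZ.ne', log_exp]
    ring
  rw [relEntropy, sum_congr rfl hterm, sum_sub_distrib, ← sum_mul,
    sum_tilt hZ.ne', one_mul]

theorem hasDerivAt_log_partitionFn_add_smul {f : α → ℝ} (hZ : partitionFn s q f ≠ 0)
    (g : α → ℝ) :
    HasDerivAt (fun t : ℝ ↦ log (partitionFn s q (f + t • g)))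
      (∑ a ∈ s, tilt s q f a * g a) 0 := by
  have hsum : HasDerivAt (fun t : ℝ ↦ ∑ a ∈ s, exp (f a + t * g a) * q a)
      (∑ a ∈ s, exp (f a) * q a * g a) 0 := by
    refine HasDerivAt.fun_sum fun a _ ↦ ?_
    simpa [mul_right_comm] using
      ((((hasDerivAt_id (0 : ℝ)).mul_const (g a)).const_add (f a)).exp).mul_const (q a)
  rw [sum_tilt_mul]
  convert hsum.log (by simpa [partitionFn] using hZ) using 2 <;> simp [partitionFn]

theorem continuous_relEntropy (s : Finset α) (q : α → ℝ) :
    Continuous fun p : α → ℝ ↦ relEntropy s p q :=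
  continuous_finsetSum s fun a _ ↦ (continuous_mul_log_div (q a)).comp (continuous_apply a)

theorem isCompact_dominatedSimplex (s : Finset α) (q : α → ℝ) :
    IsCompact (dominatedSimplex s q) := by
  have hclosed : IsClosed (dominatedSimplex s q) := by
    simp only [dominatedSimplex, Set.ofPred_and, Set.ofPred_forall]
    refine .inter (isClosed_iInter fun a ↦ isClosed_le continuous_const (continuous_apply a))
      (.inter (isClosed_iInter fun a ↦ isClosed_iInter fun _ ↦
        isClosed_eq (continuous_apply a) continuous_const)
      (.inter (isClosed_eq (continuous_finsetSum s fun a _ ↦ continuous_apply a)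
        continuous_const)
      (isClosed_iInter fun a ↦ isClosed_iInter fun _ ↦ isClosed_iInter fun _ ↦
        isClosed_eq (continuous_apply a) continuous_const)))
  refine (isCompact_univ_pi fun _ ↦ isCompact_Icc (a := (0 : ℝ)) (b := 1)).of_isClosed_subset
    hclosed fun p hp ↦ Set.mem_univ_pi.2 fun a ↦ ⟨hp.1 a, ?_⟩
  by_cases ha : a ∈ s
  · exact hp.2.2.1 ▸ single_le_sum (fun b _ ↦ hp.1 b) ha
  · exact (hp.2.1 a ha).le.trans zero_le_one

end Tilting

section Mean

variable {ι : Type*}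

def mean (s : Finset (ι → ℝ)) (p : (ι → ℝ) → ℝ) : ι → ℝ := ∑ ω ∈ s, p ω • ω

theorem continuous_mean (s : Finset (ι → ℝ)) : Continuous (mean s) :=
  continuous_finsetSum s fun ω _ ↦ (continuous_apply ω).smul continuous_const

variable [Fintype ι]

theorem tendsto_dotProduct_self_cocompact :
    Tendsto (fun x : ι → ℝ ↦ x ⬝ᵥ x) (cocompact _) atTop := by
  refine tendsto_atTop_mono (fun x ↦ ?_)
    ((tendsto_pow_atTop two_ne_zero).comp tendsto_norm_cocompact_atTop)
  have hcoord : ∀ i, x i ^ 2 ≤ x ⬝ᵥ x := fun i ↦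
    (sq (x i)).symm ▸ single_le_sum (f := fun j ↦ x j * x j) (fun j _ ↦ mul_self_nonneg (x j))
      (mem_univ i)
  have hnorm : ‖x‖ ≤ √(x ⬝ᵥ x) :=
    (pi_norm_le_iff_of_nonneg (sqrt_nonneg _)).2 fun i ↦ abs_le_sqrt (hcoord i)
  have hdot : 0 ≤ x ⬝ᵥ x := Fintype.sum_nonneg fun i ↦ mul_self_nonneg (x i)
  simpa [sq_sqrt hdot] using pow_le_pow_left₀ (norm_nonneg x) hnorm 2

theorem exists_forall_sub_mul_dotProduct_self_le {g : (ι → ℝ) → ℝ} (hg : Continuous g)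
    {r : ℝ} (hr : ∀ x, g x ≤ r) {ε : ℝ} (hε : 0 < ε) :
    ∃ x, ∀ y, g y - ε * (y ⬝ᵥ y) ≤ g x - ε * (x ⬝ᵥ x) := by
  have hcont : Continuous fun y ↦ g y - ε * (y ⬝ᵥ y) := by fun_prop
  refine hcont.exists_forall_ge ?_
  refine tendsto_atBot_mono (fun x ↦ sub_le_sub_right (hr x) _) ?_
  exact tendsto_atBot_add_const_left _ r
    (tendsto_neg_atTop_atBot.comp (tendsto_dotProduct_self_cocompact.const_mul_atTop hε))

noncomputable def dualObjective (s : Finset (ι → ℝ)) (q : (ι → ℝ) → ℝ) (θ x : ι → ℝ) : ℝ :=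
  θ ⬝ᵥ x - log (partitionFn s q (x ⬝ᵥ ·))

variable {s : Finset (ι → ℝ)} {q : (ι → ℝ) → ℝ}

theorem dotProduct_mean (v : ι → ℝ) (p : (ι → ℝ) → ℝ) :
    v ⬝ᵥ mean s p = ∑ ω ∈ s, p ω * (v ⬝ᵥ ω) := by
  simp [mean, dotProduct_sum, dotProduct_smul]

theorem dualObjective_le_relEntropy (hq0 : ∀ ω, 0 ≤ q ω) {p : (ι → ℝ) → ℝ}
    (hp : p ∈ dominatedSimplex s q) (x : ι → ℝ) :
    dualObjective s q (mean s p) x ≤ relEntropy s p q := by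
  rw [dualObjective, dotProduct_comm, dotProduct_mean]
  exact sum_mul_sub_log_partitionFn_le_relEntropy hq0 hp _

theorem dualObjective_zero (hq1 : ∑ ω ∈ s, q ω = 1) (θ : ι → ℝ) : dualObjective s q θ 0 = 0 := by
  simp [dualObjective, partitionFn, hq1]

theorem continuous_dualObjective (hq0 : ∀ ω, 0 ≤ q ω) (hq1 : ∑ ω ∈ s, q ω = 1) (θ : ι → ℝ) :
    Continuous (dualObjective s q θ) := by
  refine (continuous_const.dotProduct continuous_id).sub (Continuous.log ?_ fun x ↦
    (partitionFn_pos_of_sum_eq_one hq0 hq1 _).ne')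
  exact continuous_finsetSum s fun ω _ ↦
    ((continuous_id.dotProduct continuous_const).rexp).mul continuous_const

theorem hasDerivAt_dualObjective_add_smul (hq0 : ∀ ω, 0 ≤ q ω) (hq1 : ∑ ω ∈ s, q ω = 1)
    (θ x v : ι → ℝ) :
    HasDerivAt (fun t : ℝ ↦ dualObjective s q θ (x + t • v))
      ((θ - mean s (tilt s q (x ⬝ᵥ ·))) ⬝ᵥ v) 0 := by
  have hlin : HasDerivAt (fun t : ℝ ↦ θ ⬝ᵥ (x + t • v)) (θ ⬝ᵥ v) 0 := by
    simp only [dotProduct_add, dotProduct_smul, smul_eq_mul]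
    simpa using ((hasDerivAt_id (0 : ℝ)).mul_const (θ ⬝ᵥ v)).const_add (θ ⬝ᵥ x)
  have hlog := hasDerivAt_log_partitionFn_add_smul
    (partitionFn_pos_of_sum_eq_one hq0 hq1 (x ⬝ᵥ ·)).ne' (v ⬝ᵥ ·)
  have hfun : ∀ t : ℝ, ((x + t • v) ⬝ᵥ ·) = (x ⬝ᵥ ·) + t • (v ⬝ᵥ ·) := fun t ↦ by
    funext ω; simp [add_dotProduct, smul_dotProduct]
  rw [sub_dotProduct, dotProduct_comm (mean s _) v, dotProduct_mean]
  simp only [dualObjective, hfun]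
  exact hlin.sub hlog

theorem hasDerivAt_dotProduct_self_add_smul (x v : ι → ℝ) :
    HasDerivAt (fun t : ℝ ↦ (x + t • v) ⬝ᵥ (x + t • v)) (2 * (x ⬝ᵥ v)) 0 := by
  have h := ((hasDerivAt_id (0 : ℝ)).mul_const (2 * (x ⬝ᵥ v))).const_add (x ⬝ᵥ x) |>.fun_add
    ((hasDerivAt_pow 2 (0 : ℝ)).mul_const (v ⬝ᵥ v))
  have hpoly : (fun t : ℝ ↦ (x + t • v) ⬝ᵥ (x + t • v))
      = fun t ↦ x ⬝ᵥ x + t * (2 * (x ⬝ᵥ v)) + t ^ 2 * (v ⬝ᵥ v) := by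
    funext t
    simp only [dotProduct_add, add_dotProduct, dotProduct_smul, smul_dotProduct, smul_eq_mul,
      dotProduct_comm v x]
    ring
  rw [hpoly]
  simpa using h

theorem mean_tilt_eq_of_isMax (hq0 : ∀ ω, 0 ≤ q ω) (hq1 : ∑ ω ∈ s, q ω = 1) {θ x : ι → ℝ}
    {ε : ℝ} (hmax : ∀ y, dualObjective s q θ y - ε / 2 * (y ⬝ᵥ y)
      ≤ dualObjective s q θ x - ε / 2 * (x ⬝ᵥ x)) :
    mean s (tilt s q (x ⬝ᵥ ·)) = θ - ε • x := by
  set d := θ - mean s (tilt s q (x ⬝ᵥ ·)) - ε • x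
  have hloc : IsLocalMax (fun t : ℝ ↦ dualObjective s q θ (x + t • d)
      - ε / 2 * ((x + t • d) ⬝ᵥ (x + t • d))) 0 :=
    Eventually.of_forall fun t ↦ by simpa using hmax (x + t • d)
  have hcrit := hloc.hasDerivAt_eq_zero ((hasDerivAt_dualObjective_add_smul hq0 hq1 θ x d).sub
    ((hasDerivAt_dotProduct_self_add_smul x d).const_mul (ε / 2)))
  have hdd : d ⬝ᵥ d = 0 := by
    have : d ⬝ᵥ d = (θ - mean s (tilt s q (x ⬝ᵥ ·))) ⬝ᵥ d - ε * (x ⬝ᵥ d) := by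
      rw [sub_dotProduct, smul_dotProduct, smul_eq_mul]
    linarith
  have hd : θ - mean s (tilt s q (x ⬝ᵥ ·)) - ε • x = 0 := dotProduct_self_eq_zero.1 hdd
  rw [sub_sub, sub_eq_zero] at hd
  rw [hd, add_sub_cancel_right]

theorem exists_relEntropy_le_of_dualObjective_le (hq0 : ∀ ω, 0 ≤ q ω)
    (hq1 : ∑ ω ∈ s, q ω = 1) {θ : ι → ℝ} {r : ℝ} (hr : ∀ x, dualObjective s q θ x ≤ r)
    {ε : ℝ} (hε : 0 < ε) :
    ∃ p ∈ dominatedSimplex s q, relEntropy s p q ≤ r ∧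
      (θ - mean s p) ⬝ᵥ (θ - mean s p) ≤ 2 * ε * r := by
  obtain ⟨x, hx⟩ := exists_forall_sub_mul_dotProduct_self_le
    (continuous_dualObjective hq0 hq1 θ) hr (half_pos hε)
  have hZ := partitionFn_pos_of_sum_eq_one hq0 hq1 (x ⬝ᵥ ·)
  have hmean := mean_tilt_eq_of_isMax hq0 hq1 hx
  have hent : relEntropy s (tilt s q (x ⬝ᵥ ·)) q = dualObjective s q θ x - ε * (x ⬝ᵥ x) := by
    rw [relEntropy_tilt hZ, ← dotProduct_mean, hmean, dualObjective, dotProduct_sub,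
      dotProduct_smul, smul_eq_mul, dotProduct_comm x θ]
    ring
  have hpen : ε / 2 * (x ⬝ᵥ x) ≤ dualObjective s q θ x := by
    simpa [dualObjective_zero hq1] using hx 0
  have hxx : 0 ≤ x ⬝ᵥ x := Fintype.sum_nonneg fun i ↦ mul_self_nonneg (x i)
  refine ⟨_, tilt_mem_dominatedSimplex hq0 hZ, ?_, ?_⟩
  · rw [hent]
    nlinarith [hr x]
  · rw [hmean, sub_sub_cancel, dotProduct_smul, smul_dotProduct, smul_eq_mul, smul_eq_mul]
    nlinarith [hr x]

theorem exists_mean_eq_relEntropy_le_of_dualObjective_le (hq0 : ∀ ω, 0 ≤ q ω)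
    (hq1 : ∑ ω ∈ s, q ω = 1) {θ : ι → ℝ} {r : ℝ} (hr : ∀ x, dualObjective s q θ x ≤ r) :
    ∃ p ∈ dominatedSimplex s q, mean s p = θ ∧ relEntropy s p q ≤ r := by
  set M := dominatedSimplex s q ∩ {p | relEntropy s p q ≤ r}
  have hM : IsCompact M := (isCompact_dominatedSimplex s q).inter_right
    (isClosed_le (continuous_relEntropy s q) continuous_const)
  obtain ⟨p₁, hp₁, hent₁, -⟩ := exists_relEntropy_le_of_dualObjective_le hq0 hq1 hr one_pos
  have hcont : Continuous fun p ↦ (θ - mean s p) ⬝ᵥ (θ - mean s p) := by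
    have := (continuous_const : Continuous fun _ : (ι → ℝ) → ℝ ↦ θ).sub (continuous_mean s)
    exact this.dotProduct this
  obtain ⟨p, hpM, hpmin⟩ := hM.exists_isMinOn ⟨p₁, hp₁, hent₁⟩ hcont.continuousOn
  refine ⟨p, hpM.1, ?_, hpM.2⟩
  have hsmall : ∀ ε > 0, (θ - mean s p) ⬝ᵥ (θ - mean s p) ≤ 2 * ε * r := fun ε hε ↦ by
    obtain ⟨p', hp', hent', hp'mean⟩ := exists_relEntropy_le_of_dualObjective_le hq0 hq1 hr hε
    exact (hpmin ⟨hp', hent'⟩).trans hp'mean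
  have hlim : Tendsto (fun ε : ℝ ↦ 2 * ε * r) (𝓝[>] 0) (𝓝 0) :=
    (by fun_prop : Continuous fun ε : ℝ ↦ 2 * ε * r).tendsto' 0 0 (by simp)
      |>.mono_left nhdsWithin_le_nhds
  have hzero := le_antisymm (ge_of_tendsto hlim (eventually_nhdsWithin_of_forall hsmall))
    (Fintype.sum_nonneg fun i ↦ mul_self_nonneg _)
  exact (sub_eq_zero.1 (dotProduct_self_eq_zero.1 hzero)).symm

end Mean

theorem klDiv_eq_relEntropy {n : ℕ} {Ω : Finset (Fin n → ℝ)} {p q : (Fin n → ℝ) → ℝ}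
    (habs : ∀ ω ∈ Ω, q ω = 0 → p ω = 0) : klDiv Ω p q = relEntropy Ω p q := by
  rw [klDiv, relEntropy, EReal.coe_finset_sum]
  refine sum_congr rfl fun ω hω ↦ ?_
  by_cases hp : p ω = 0
  · simp [hp]
  · rw [if_neg hp, if_neg (mt (habs ω hω) hp)]

theorem klDiv_eq_top {n : ℕ} {Ω : Finset (Fin n → ℝ)} {p q : (Fin n → ℝ) → ℝ}
    {ω : Fin n → ℝ} (hω : ω ∈ Ω) (hq : q ω = 0) (hp : p ω ≠ 0) : klDiv Ω p q = ⊤ := by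
  rw [klDiv, ← add_sum_erase _ _ hω, if_neg hp, if_pos hq]
  exact EReal.top_add_of_ne_bot
    (EReal.finset_sum_ne_bot fun ω _ ↦ by split_ifs <;> simp [-EReal.coe_mul])

theorem iSup_dualObjective_le_klDiv {n : ℕ} {Ω : Finset (Fin n → ℝ)} {p q : (Fin n → ℝ) → ℝ}
    (hq0 : ∀ ω, 0 ≤ q ω) (hp0 : ∀ ω, 0 ≤ p ω) (hpΩ : ∀ ω ∉ Ω, p ω = 0)
    (hp1 : ∑ ω ∈ Ω, p ω = 1) :
    ⨆ x, (dualObjective Ω q (mean Ω p) x : EReal) ≤ klDiv Ω p q := by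
  by_cases habs : ∀ ω ∈ Ω, q ω = 0 → p ω = 0
  · rw [klDiv_eq_relEntropy habs]
    exact iSup_le fun x ↦ EReal.coe_le_coe_iff.2
      (dualObjective_le_relEntropy hq0 ⟨hp0, hpΩ, hp1, habs⟩ x)
  · push Not at habs
    obtain ⟨ω, hω, hq, hp⟩ := habs
    rw [klDiv_eq_top hω hq hp]
    exact le_top

theorem stmt_8_general {n : ℕ} (Ω : Finset (Fin n → ℝ)) (q : (Fin n → ℝ) → ℝ)
    (hq0 : ∀ ω, 0 ≤ q ω) (hq1 : ∑ ω ∈ Ω, q ω = 1)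
    (θ : Fin n → ℝ) :
    (⨆ x : Fin n → ℝ,
        (((∑ j, θ j * x j) -
          Real.log (∑ ω ∈ Ω, Real.exp (∑ j, x j * ω j) * q ω) : ℝ) : EReal)) =
      sInf { D : EReal | ∃ p : (Fin n → ℝ) → ℝ,
        (∀ ω, 0 ≤ p ω) ∧ (∀ ω ∉ Ω, p ω = 0) ∧ (∑ ω ∈ Ω, p ω = 1) ∧
        (∑ ω ∈ Ω, p ω • ω) = θ ∧ D = klDiv Ω p q } := by
  change ⨆ x, (dualObjective Ω q θ x : EReal) = _
  apply le_antisymm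
  · refine le_sInf ?_
    rintro _ ⟨p, hp0, hpΩ, hp1, rfl, rfl⟩
    exact iSup_dualObjective_le_klDiv hq0 hp0 hpΩ hp1
  · set F := ⨆ x, (dualObjective Ω q θ x : EReal)
    have hF0 : ((dualObjective Ω q θ 0 : ℝ) : EReal) ≤ F := le_iSup_of_le 0 le_rfl
    rcases eq_or_ne F ⊤ with hFtop | hFtop
    · exact hFtop ▸ le_top
    have hF := EReal.coe_toReal hFtop (ne_bot_of_le_ne_bot (EReal.coe_ne_bot _) hF0)
    have hr : ∀ x, dualObjective Ω q θ x ≤ F.toReal := fun x ↦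
      EReal.coe_le_coe_iff.1 (hF.symm ▸ le_iSup_of_le x le_rfl)
    obtain ⟨p, hp, hmean, hent⟩ := exists_mean_eq_relEntropy_le_of_dualObjective_le hq0 hq1 hr
    refine sInf_le_of_le ⟨p, hp.1, hp.2.1, hp.2.2.1, hmean, rfl⟩ ?_
    rw [klDiv_eq_relEntropy hp.2.2.2, ← hF]
    exact EReal.coe_le_coe_iff.2 hent

/-- The Legendre dual `F(θ)` of the log-moment generating function of a
pmf `q` on a finite set `Ω ⊆ ℝ^n` equals the minimum of `D_KL(p‖q)` over pmfs `p` on `Ω`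
with mean `θ` (and equals `+∞` if no such `p` exists, since `sInf ∅ = ⊤`). -/
theorem stmt_8 {n : ℕ} (Ω : Finset (Fin n → ℝ)) (q : (Fin n → ℝ) → ℝ)
    (hq0 : ∀ ω, 0 ≤ q ω) (hqsupp : ∀ ω ∉ Ω, q ω = 0) (hq1 : ∑ ω ∈ Ω, q ω = 1)
    (θ : Fin n → ℝ) :
    (⨆ x : Fin n → ℝ,
        (((∑ j, θ j * x j) -
          Real.log (∑ ω ∈ Ω, Real.exp (∑ j, x j * ω j) * q ω) : ℝ) : EReal)) =
      sInf { D : EReal | ∃ p : (Fin n → ℝ) → ℝ,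
        (∀ ω, 0 ≤ p ω) ∧ (∀ ω ∉ Ω, p ω = 0) ∧ (∑ ω ∈ Ω, p ω = 1) ∧
        (∑ ω ∈ Ω, p ω • ω) = θ ∧ D = klDiv Ω p q } :=
  stmt_8_general Ω q hq0 hq1 θ
end

section
/- Let σ be an n×n positive semidefinite Hermitian matrix with unit trace and sorted eigenvalue vector q (decreasing). For any unitary u, the k-th principal minor prim_k(u† σ u) satisfies prim_k(u† σ u) ≤ q_1 q_2 ⋯ q_k, with equality for all k simultaneously when u† σ u = diag(q). -/
open scoped ComplexOrder

open Matrix Finset in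
/-- Cauchy–Binet style expansion of the determinant of a product of rectangular matrices. -/
lemma cb_expand {k n : ℕ} (A : Matrix (Fin k) (Fin n) ℂ) (B : Matrix (Fin n) (Fin k) ℂ) :
    (A * B).det = ∑ p : Fin k → Fin n, (A.submatrix id p).det * ∏ i, B (p i) i := by
  have h1 : (A * B).det
      = ∑ p : Fin k → Fin n, ∑ s : Equiv.Perm (Fin k),
          (Equiv.Perm.sign s : ℤ) * ∏ i, A (s i) (p i) * B (p i) i := by
    simp only [det_apply', mul_apply, prod_univ_sum, mul_sum, Fintype.piFinset_univ]
    rw [Finset.sum_comm]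
  rw [h1]
  refine Finset.sum_congr rfl fun p _ => ?_
  rw [det_apply', Finset.sum_mul]
  refine Finset.sum_congr rfl fun s _ => ?_
  simp only [submatrix_apply, id_eq]
  rw [Finset.prod_mul_distrib, mul_assoc]

lemma strictMono_val_le {k n : ℕ} {f : Fin k → Fin n} (hf : StrictMono f) :
    ∀ (m : ℕ) (i : Fin k), (i : ℕ) = m → m ≤ (f i : ℕ) := by
  intro m
  induction m with
  | zero => intro i _; exact Nat.zero_le _
  | succ m ih =>
    intro i hi
    have hik := i.isLt
    have hmk : m < k := by omega
    have h1 : (⟨m, hmk⟩ : Fin k) < i := by rw [Fin.lt_def]; simp [hi]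
    have h2 := hf h1
    rw [Fin.lt_def] at h2
    have h3 := ih ⟨m, hmk⟩ rfl
    omega

/-- A product of `k` distinct values of an antitone nonnegative function is at most
the product of its first `k` values. -/
lemma prod_q_le {n k : ℕ} (hk : k ≤ n) (q : Fin n → ℝ) (hq : Antitone q) (hq0 : ∀ i, 0 ≤ q i)
    (p : Fin k → Fin n) (hp : Function.Injective p) :
    ∏ i : Fin k, q (p i) ≤ ∏ i : Fin k, q (Fin.castLE hk i) := by
  classical
  set S : Finset (Fin n) := Finset.univ.image p with hS
  have hcard : S.card = k := by
    rw [hS, Finset.card_image_of_injective _ hp, Finset.card_univ, Fintype.card_fin]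
  set g := S.orderEmbOfFin hcard with hg
  have himg : Finset.univ.image ⇑g = S := by
    ext x
    simp only [Finset.mem_image, Finset.mem_univ, true_and]
    constructor
    · rintro ⟨i, rfl⟩; exact Finset.orderEmbOfFin_mem S hcard i
    · intro hx
      have : x ∈ Set.range ⇑g := by rw [hg, Finset.range_orderEmbOfFin]; exact hx
      exact this
  have e1 : ∏ x ∈ S, q x = ∏ i : Fin k, q (p i) := Finset.prod_image (fun x _ y _ h => hp h)
  have e2 : ∏ x ∈ S, q x = ∏ i : Fin k, q (g i) := by
    rw [← himg]; exact Finset.prod_image (fun x _ y _ h => g.injective h)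
  have h1 : ∏ i : Fin k, q (p i) = ∏ i : Fin k, q (g i) := by rw [← e1, e2]
  rw [h1]
  refine Finset.prod_le_prod (fun i _ => hq0 _) (fun i _ => ?_)
  refine hq ?_
  rw [Fin.le_def]
  simpa using strictMono_val_le g.strictMono (i : ℕ) i rfl

open Matrix Finset in
/-- Grouping the Cauchy–Binet expansion terms along orbits of permutations. -/
lemma group_sum {n k : ℕ} (V : Matrix (Fin k) (Fin n) ℂ) (c : Fin n → ℂ) :
    (k.factorial : ℂ) * ∑ p : Fin k → Fin n,
        (V.submatrix id p).det * ((∏ i, c (p i)) * ∏ i, star (V i (p i)))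
      = ∑ p : Fin k → Fin n,
        (V.submatrix id p).det * ((∏ i, c (p i)) * star ((V.submatrix id p).det)) := by
  classical
  set F : (Fin k → Fin n) → ℂ := fun p =>
    (V.submatrix id p).det * ((∏ i, c (p i)) * ∏ i, star (V i (p i))) with hF
  have step1 : ∀ τ : Equiv.Perm (Fin k),
      (∑ p : Fin k → Fin n, F p) = ∑ p : Fin k → Fin n, F (p ∘ τ) := by
    intro τ
    refine (Fintype.sum_bijective (fun p : Fin k → Fin n => p ∘ τ) ?_ _ _ fun p => rfl).symm
    constructor
    · intro a b h
      funext i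
      have := congrFun h (τ.symm i)
      simpa using this
    · intro g
      exact ⟨g ∘ ⇑τ.symm, funext fun i => by simp⟩
  have step2 : ∀ p : Fin k → Fin n,
      (∑ τ : Equiv.Perm (Fin k), F (p ∘ τ))
        = (V.submatrix id p).det * ((∏ i, c (p i)) * star ((V.submatrix id p).det)) := by
    intro p
    have hstar : star ((V.submatrix id p).det)
        = ∑ τ : Equiv.Perm (Fin k), ((Equiv.Perm.sign τ : ℤ) : ℂ) *
            ∏ i, star (V i (p (τ i))) := by
      rw [← Matrix.det_conjTranspose, det_apply']
      refine Finset.sum_congr rfl fun τ _ => ?_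
      simp [conjTranspose_apply, submatrix_apply]
    rw [hstar, Finset.mul_sum, Finset.mul_sum]
    refine Finset.sum_congr rfl fun τ _ => ?_
    have hdet : (V.submatrix id (p ∘ ⇑τ)).det
        = ((Equiv.Perm.sign τ : ℤ) : ℂ) * (V.submatrix id p).det := by
      have : V.submatrix id (p ∘ ⇑τ) = (V.submatrix id p).submatrix id ⇑τ := rfl
      rw [this, Matrix.det_permute']
    have hc : (∏ i, c (p (τ i))) = ∏ i, c (p i) := Equiv.prod_comp τ (fun i => c (p i))
    rw [hF]
    simp only [Function.comp_apply, hdet, hc]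
    ring
  calc (k.factorial : ℂ) * ∑ p : Fin k → Fin n, F p
      = ∑ τ : Equiv.Perm (Fin k), ∑ p : Fin k → Fin n, F p := by
        rw [Finset.sum_const, nsmul_eq_mul]
        congr 1
        simp [Fintype.card_perm]
    _ = ∑ τ : Equiv.Perm (Fin k), ∑ p : Fin k → Fin n, F (p ∘ τ) :=
        Finset.sum_congr rfl fun τ _ => step1 τ
    _ = ∑ p : Fin k → Fin n, ∑ τ : Equiv.Perm (Fin k), F (p ∘ τ) := Finset.sum_comm
    _ = _ := Finset.sum_congr rfl fun p _ => step2 p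

/-- The `k`-th principal minor (upper-left `k × k` subdeterminant) of a square matrix. -/
noncomputable def prim {n : ℕ} (A : Matrix (Fin n) (Fin n) ℂ) (k : ℕ) (hk : k ≤ n) : ℂ :=
  (A.submatrix (Fin.castLE hk) (Fin.castLE hk)).det

open Matrix Finset in
/-- Main inequality: the `k`-th principal minor of `v D v†` is at most the product of the
first `k` diagonal entries of `D`, for `D = diag q` with `q` antitone nonnegative. -/
lemma key_le {n : ℕ} (q : Fin n → ℝ) (hq : Antitone q) (hq0 : ∀ i, 0 ≤ q i)
    (v : Matrix (Fin n) (Fin n) ℂ) (hv : v ∈ Matrix.unitaryGroup (Fin n) ℂ)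
    (k : ℕ) (hk : k ≤ n) :
    prim (v * Matrix.diagonal (fun i => (q i : ℂ)) * vᴴ) k hk
      ≤ ((∏ i : Fin k, q (Fin.castLE hk i) : ℝ) : ℂ) := by
  classical
  set e : Fin k → Fin n := Fin.castLE hk with he
  set D : Matrix (Fin n) (Fin n) ℂ := Matrix.diagonal (fun i => (q i : ℂ)) with hD
  set V : Matrix (Fin k) (Fin n) ℂ := v.submatrix e id with hV
  set d : (Fin k → Fin n) → ℂ := fun p => (V.submatrix id p).det with hd
  set Q : ℝ := ∏ i : Fin k, q (e i) with hQ
  have hsub : (v * D * vᴴ).submatrix e e = V * ((D * vᴴ).submatrix id e) := by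
    rw [mul_assoc, Matrix.submatrix_mul _ _ e id e Function.bijective_id]
  have hVV : V * (vᴴ.submatrix id e) = 1 := by
    rw [hV, ← Matrix.submatrix_mul _ _ e id e Function.bijective_id]
    have h1 : v * vᴴ = 1 := by
      have := (Matrix.mem_unitaryGroup_iff).mp hv
      rwa [Matrix.star_eq_conjTranspose] at this
    rw [h1, Matrix.submatrix_one e (Fin.castLE_injective hk)]
  have expand1 : prim (v * D * vᴴ) k hk
      = ∑ p : Fin k → Fin n, d p * ((∏ i, (q (p i) : ℂ)) * ∏ i, star (V i (p i))) := by
    rw [prim, ← he, hsub, cb_expand]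
    refine Finset.sum_congr rfl fun p _ => ?_
    have hB : ∀ i : Fin k, ((D * vᴴ).submatrix id e) (p i) i
        = (q (p i) : ℂ) * star (V i (p i)) := by
      intro i
      rw [Matrix.submatrix_apply, hD, Matrix.diagonal_mul, Matrix.conjTranspose_apply]
      rfl
    rw [Finset.prod_congr rfl fun i _ => hB i, Finset.prod_mul_distrib]
  have expand2 : (1 : ℂ) = ∑ p : Fin k → Fin n, d p * ∏ i, star (V i (p i)) := by
    have := cb_expand V (vᴴ.submatrix id e)
    rw [hVV, Matrix.det_one] at this
    rw [this]
    rfl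
  have hdzero : ∀ p : Fin k → Fin n, ¬ Function.Injective p → d p = 0 := by
    intro p hp
    rw [Function.not_injective_iff] at hp
    obtain ⟨i, j, hpij, hij⟩ := hp
    exact Matrix.det_zero_of_column_eq hij (fun x => by simp [Matrix.submatrix_apply, hpij])
  have g1 : (k.factorial : ℂ) * prim (v * D * vᴴ) k hk
      = ∑ p : Fin k → Fin n, d p * ((∏ i, (q (p i) : ℂ)) * star (d p)) := by
    rw [expand1]; exact group_sum V (fun a => (q a : ℂ))
  have g2 : (k.factorial : ℂ) = ∑ p : Fin k → Fin n, d p * star (d p) := by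
    have := group_sum V (fun _ => (1 : ℂ))
    simp only [Finset.prod_const_one, one_mul] at this
    rw [← expand2, mul_one] at this
    exact this
  have hterm : ∀ p : Fin k → Fin n,
      d p * ((∏ i, (q (p i) : ℂ)) * star (d p)) ≤ (Q : ℂ) * (d p * star (d p)) := by
    intro p
    have hds : d p * star (d p) = ((Complex.normSq (d p) : ℝ) : ℂ) := by
      rw [Complex.star_def, Complex.mul_conj]
    have hrearr : d p * ((∏ i, (q (p i) : ℂ)) * star (d p))
        = (∏ i, (q (p i) : ℂ)) * (d p * star (d p)) := by ring
    rw [hrearr, hds]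
    rw [show (∏ i, (q (p i) : ℂ)) = ((∏ i, q (p i) : ℝ) : ℂ) by push_cast; rfl]
    rw [← Complex.ofReal_mul, ← Complex.ofReal_mul]
    rw [Complex.real_le_real]
    by_cases hp : Function.Injective p
    · exact mul_le_mul_of_nonneg_right (prod_q_le hk q hq hq0 p hp) (Complex.normSq_nonneg _)
    · rw [hdzero p hp]
      simp
  have hsum : (k.factorial : ℂ) * prim (v * D * vᴴ) k hk ≤ (k.factorial : ℂ) * (Q : ℂ) := by
    rw [g1]
    calc ∑ p : Fin k → Fin n, d p * ((∏ i, (q (p i) : ℂ)) * star (d p))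
        ≤ ∑ p : Fin k → Fin n, (Q : ℂ) * (d p * star (d p)) :=
          Finset.sum_le_sum fun p _ => hterm p
      _ = (Q : ℂ) * ∑ p : Fin k → Fin n, d p * star (d p) := by rw [Finset.mul_sum]
      _ = (k.factorial : ℂ) * (Q : ℂ) := by rw [← g2]; ring
  have hne : ((k.factorial : ℕ) : ℂ) ≠ 0 := by
    exact_mod_cast Nat.factorial_ne_zero k
  have hinv : (0 : ℂ) ≤ ((k.factorial : ℕ) : ℂ)⁻¹ := by
    rw [show ((k.factorial : ℕ) : ℂ) = (((k.factorial : ℕ) : ℝ) : ℂ) by push_cast; rfl]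
    rw [← Complex.ofReal_inv, Complex.zero_le_real]
    positivity
  have h0 : (0 : ℂ) ≤ (k.factorial : ℂ) * ((Q : ℂ) - prim (v * D * vᴴ) k hk) := by
    rw [mul_sub, sub_nonneg]; exact hsum
  have h1 := mul_nonneg hinv h0
  rw [← mul_assoc, inv_mul_cancel₀ hne, one_mul, sub_nonneg] at h1
  exact h1

/-- Let `σ` be positive semidefinite Hermitian with unit trace and
decreasing eigenvalue vector `q`.  For any unitary `u`,
`prim_k(u† σ u) ≤ q_1 ⋯ q_k`, with equality for all `k` simultaneously when
`u† σ u = diag(q)`. -/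
theorem stmt_16 {n : ℕ} (σ : Matrix (Fin n) (Fin n) ℂ) (hσ : σ.PosSemidef)
    (htr : σ.trace = 1) (q : Fin n → ℝ) (hq : Antitone q)
    (hdiag : ∃ w ∈ Matrix.unitaryGroup (Fin n) ℂ,
      star w * σ * w = Matrix.diagonal (fun i => (q i : ℂ))) :
    (∀ u ∈ Matrix.unitaryGroup (Fin n) ℂ, ∀ (k : ℕ) (hk : k ≤ n),
      prim (star u * σ * u) k hk ≤ ((∏ i : Fin k, q (Fin.castLE hk i) : ℝ) : ℂ)) ∧
    (∀ u ∈ Matrix.unitaryGroup (Fin n) ℂ,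
      star u * σ * u = Matrix.diagonal (fun i => (q i : ℂ)) →
      ∀ (k : ℕ) (hk : k ≤ n),
        prim (star u * σ * u) k hk = ((∏ i : Fin k, q (Fin.castLE hk i) : ℝ) : ℂ)) := by
  classical
  obtain ⟨w, hw, hwd⟩ := hdiag
  -- `q` is nonnegative
  have hq0 : ∀ i, 0 ≤ q i := by
    have hpsd : (Matrix.diagonal (fun i => (q i : ℂ))).PosSemidef := by
      rw [← hwd, Matrix.star_eq_conjTranspose]
      exact hσ.conjTranspose_mul_mul_same w
    intro i
    have := Matrix.posSemidef_diagonal_iff.mp hpsd i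
    exact_mod_cast this
  -- equality part (used independently of `u`)
  have heq : ∀ u ∈ Matrix.unitaryGroup (Fin n) ℂ,
      star u * σ * u = Matrix.diagonal (fun i => (q i : ℂ)) →
      ∀ (k : ℕ) (hk : k ≤ n),
        prim (star u * σ * u) k hk = ((∏ i : Fin k, q (Fin.castLE hk i) : ℝ) : ℂ) := by
    intro u _ hueq k hk
    rw [prim, hueq,
      Matrix.submatrix_diagonal _ _ (Fin.castLE_injective hk), Matrix.det_diagonal]
    push_cast
    rfl
  refine ⟨?_, heq⟩
  intro u hu k hk
  -- σ = w D w†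
  have hw1 : w * star w = 1 := Matrix.mem_unitaryGroup_iff.mp hw
  have hσeq : σ = w * Matrix.diagonal (fun i => (q i : ℂ)) * star w := by
    have : w * (star w * σ * w) * star w = σ := by
      rw [show w * (star w * σ * w) * star w = (w * star w) * σ * (w * star w) by
        noncomm_ring]
      rw [hw1, one_mul, mul_one]
    rw [← hwd, this]
  set v : Matrix (Fin n) (Fin n) ℂ := star u * w with hv
  have hvmem : v ∈ Matrix.unitaryGroup (Fin n) ℂ :=
    mul_mem (Unitary.star_mem hu) hw
  have hform : star u * σ * u = v * Matrix.diagonal (fun i => (q i : ℂ)) * star v := by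
    rw [hσeq, hv, star_mul, star_star]
    noncomm_ring
  rw [hform, Matrix.star_eq_conjTranspose]
  exact key_le q hq hq0 v hvmem k hk
end

section
/- Let σ be a positive definite n×n Hermitian matrix with unit trace, and ρ = u diag(p) u† a density matrix with p a decreasing probability vector and u unitary. Define I(ρ‖σ) = Σ_{k=1}^n ( p_k log p_k − (p_k − p_{k+1}) log prim_k(u† σ u) ) with p_{n+1} = 0. Then inf_{u ∈ U(n)} I(u diag(p) u† ‖ σ) = D_KL(p‖q), where q is the decreasing eigenvalue vector of σ and D_KL(p‖q) = Σ_k p_k log(p_k/q_k). -/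
open scoped ComplexOrder
/-- The value `p_{k+1}`, with the convention `p_{n+1} = 0`. -/
noncomputable def pnext {n : ℕ} (p : Fin n → ℝ) (k : Fin n) : ℝ :=
  if h : (k : ℕ) + 1 < n then p ⟨(k : ℕ) + 1, h⟩ else 0

/-- The Keyl rate function `I(u diag(p) u† ‖ σ)
  = Σ_k ( p_k log p_k − (p_k − p_{k+1}) log prim_k(u† σ u) )`. -/
noncomputable def keylRate {n : ℕ} (σ : Matrix (Fin n) (Fin n) ℂ) (p : Fin n → ℝ)
    (u : Matrix (Fin n) (Fin n) ℂ) : ℝ :=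
  ∑ k : Fin n, (p k * Real.log (p k) -
    (p k - pnext p k) * Real.log ((prim (star u * σ * u) ((k : ℕ) + 1) k.isLt).re))

/-!
Write `σ = w diag(q) w†`. For a unitary `u`, the leading `k × k` minor of `u† σ u` is
`det (M† diag(q) M)` for an isometry `M : ℂ^k → ℂ^n` (the first `k` columns of `w† u`). By
Cauchy–Binet it is the convex combination, with weights `|det M_S|²` summing to
`det (M† M) = 1`, of the products `∏_{i ∈ S} q_i` over `k`-subsets `S`, each at most
`q_1 ⋯ q_k` since `q` is decreasing. As `p_k - p_{k+1} ≥ 0`, this bounds `I` below by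
`Σ_k p_k log p_k - Σ_k (p_k - p_{k+1}) log (q_1 ⋯ q_k)`, which is `D(p‖q)` by Abel summation,
and `u = w` attains the bound.
-/

open Finset Matrix

theorem Fin.val_le_val_of_strictMono {m n : ℕ} {s : Fin m → Fin n} (hs : StrictMono s)
    (i : Fin m) : (i : ℕ) ≤ s i := by
  obtain ⟨i, hi⟩ := i
  induction i with
  | zero => exact Nat.zero_le _
  | succ j ih => exact Nat.lt_of_le_of_lt (ih (by omega)) (hs (Fin.mk_lt_mk.2 j.lt_succ_self))

noncomputable def Fin.strictMonoProdPermEquivInjective (m n : ℕ) :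
    {s : Fin m → Fin n // StrictMono s} × Equiv.Perm (Fin m) ≃
      {g : Fin m → Fin n // Function.Injective g} where
  toFun x := ⟨x.1.1 ∘ x.2, x.1.2.injective.comp x.2.injective⟩
  invFun g := (⟨g.1 ∘ Tuple.sort g.1,
    (Tuple.monotone_sort g.1).strictMono_of_injective (g.2.comp (Tuple.sort g.1).injective)⟩,
    (Tuple.sort g.1)⁻¹)
  left_inv := by
    rintro ⟨⟨s, hs⟩, π⟩
    have hsort : (s ∘ π) ∘ Tuple.sort (s ∘ π) = s := by
      rw [Tuple.comp_perm_comp_sort_eq_comp_sort, Tuple.sort_eq_refl_iff_monotone.2 hs.monotone]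
      rfl
    have hπ : Tuple.sort (s ∘ π) = π⁻¹ := Equiv.ext fun i => by
      rw [Equiv.Perm.inv_def, Equiv.eq_symm_apply]
      exact hs.injective (congrFun hsort i)
    ext i <;> simp [hπ]
  right_inv g := by
    ext i
    simp

namespace Matrix

variable {R : Type*} [CommRing R]

theorem det_mul_eq_sum_det_submatrix_mul_prod {ι κ : Type*} [Fintype ι] [DecidableEq ι]
    [Fintype κ] (A : Matrix ι κ R) (B : Matrix κ ι R) :
    (A * B).det = ∑ g : ι → κ, (A.submatrix id g).det * ∏ i, B (g i) i := by
  simp only [det_apply, mul_apply, prod_univ_sum, Fintype.piFinset_univ, smul_sum, sum_mul]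
  rw [sum_comm]
  refine sum_congr rfl fun g _ => sum_congr rfl fun σ _ => ?_
  simp only [prod_mul_distrib, submatrix_apply, id_eq, smul_mul_assoc]

theorem det_mul_eq_sum_strictMono {m n : ℕ} (A : Matrix (Fin m) (Fin n) R)
    (B : Matrix (Fin n) (Fin m) R) :
    (A * B).det = ∑ s : {s : Fin m → Fin n // StrictMono s},
      (A.submatrix id s).det * (B.submatrix s id).det := by
  classical
  -- Terms with non-injective `g` have a repeated column; an injective `g` is `s ∘ π` with `s`
  -- strictly monotone, and the sum over `π` is the Leibniz expansion of `det (B.submatrix s id)`.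
  set F : (Fin m → Fin n) → R := fun g => (A.submatrix id g).det * ∏ i, B (g i) i
  have hF : ∀ g : {g : Fin m → Fin n // ¬ Function.Injective g}, F g = 0 := by
    rintro ⟨g, hg⟩
    obtain ⟨i, j, hij, hne⟩ := Function.not_injective_iff.1 hg
    have hA : (A.submatrix id g).det = 0 := det_zero_of_column_eq hne fun k => by simp [hij]
    simp only [F, hA, zero_mul]
  have hperm : ∀ s : {s : Fin m → Fin n // StrictMono s},
      ∑ π : Equiv.Perm (Fin m), F (s.1 ∘ π) =
        (A.submatrix id s).det * (B.submatrix s id).det := by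
    intro s
    have hcol : ∀ π : Equiv.Perm (Fin m),
        A.submatrix id (s.1 ∘ π) = (A.submatrix id s).submatrix id π := fun π => rfl
    simp only [F, hcol, det_permute', det_apply' (B.submatrix s id), mul_sum]
    refine sum_congr rfl fun π _ => ?_
    simp only [submatrix_apply, id_eq, Function.comp_apply]
    ring
  rw [det_mul_eq_sum_det_submatrix_mul_prod, ← Fintype.sum_subtype_add_sum_subtype
    Function.Injective F, sum_eq_zero fun g _ => hF g, add_zero,
    ← (Fin.strictMonoProdPermEquivInjective m n).sum_comp, Fintype.sum_prod_type]
  exact sum_congr rfl fun s _ => hperm s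

theorem det_conjTranspose_mul_diagonal_mul {m n : ℕ} (d : Fin n → ℝ)
    (M : Matrix (Fin n) (Fin m) ℂ) :
    (Mᴴ * diagonal (fun i => (d i : ℂ)) * M).det =
      ((∑ s : {s : Fin m → Fin n // StrictMono s},
        (∏ i, d (s.1 i)) * Complex.normSq (M.submatrix s id).det : ℝ) : ℂ) := by
  rw [Matrix.mul_assoc, det_mul_eq_sum_strictMono]
  push_cast
  refine sum_congr rfl fun s _ => ?_
  have hrows : (diagonal (fun i => (d i : ℂ)) * M).submatrix s id =
      diagonal (fun i => (d (s.1 i) : ℂ)) * M.submatrix s id := by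
    ext i j
    simp
  rw [← conjTranspose_submatrix, det_conjTranspose, hrows, det_mul, det_diagonal,
    Complex.normSq_eq_conj_mul_self]
  simp only [RCLike.star_def]
  ring

theorem sum_normSq_det_submatrix_eq_one {m n : ℕ} {M : Matrix (Fin n) (Fin m) ℂ}
    (hM : Mᴴ * M = 1) :
    ∑ s : {s : Fin m → Fin n // StrictMono s}, Complex.normSq (M.submatrix s id).det = 1 := by
  have h := det_conjTranspose_mul_diagonal_mul (fun _ => 1) M
  simp only [Complex.ofReal_one, diagonal_one, Matrix.mul_one, hM, det_one, prod_const_one,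
    one_mul] at h
  exact_mod_cast h.symm

theorem re_det_conjTranspose_mul_diagonal_mul_pos {m n : ℕ} {d : Fin n → ℝ}
    (hd : ∀ i, 0 < d i) {M : Matrix (Fin n) (Fin m) ℂ} (hM : Mᴴ * M = 1) :
    0 < (Mᴴ * diagonal (fun i => (d i : ℂ)) * M).det.re := by
  obtain ⟨s, -, hs⟩ := exists_ne_zero_of_sum_ne_zero
    ((sum_normSq_det_submatrix_eq_one hM).trans_ne one_ne_zero)
  rw [det_conjTranspose_mul_diagonal_mul, Complex.ofReal_re]
  refine sum_pos' (fun s _ => ?_) ⟨s, mem_univ s, ?_⟩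
  · exact mul_nonneg (prod_nonneg fun i _ => (hd _).le) (Complex.normSq_nonneg _)
  · exact mul_pos (prod_pos fun i _ => hd _) ((Complex.normSq_nonneg _).lt_of_ne hs.symm)

theorem re_det_conjTranspose_mul_diagonal_mul_le {m n : ℕ} {d : Fin n → ℝ}
    (hd : ∀ i, 0 ≤ d i) (hanti : Antitone d) (hmn : m ≤ n) {M : Matrix (Fin n) (Fin m) ℂ}
    (hM : Mᴴ * M = 1) :
    (Mᴴ * diagonal (fun i => (d i : ℂ)) * M).det.re ≤
      ∏ i : Fin m, d (Fin.castLE hmn i) := by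
  rw [det_conjTranspose_mul_diagonal_mul, Complex.ofReal_re]
  calc ∑ s : {s : Fin m → Fin n // StrictMono s},
          (∏ i, d (s.1 i)) * Complex.normSq (M.submatrix s id).det
      ≤ ∑ s : {s : Fin m → Fin n // StrictMono s},
          (∏ i, d (Fin.castLE hmn i)) * Complex.normSq (M.submatrix s id).det := by
        refine sum_le_sum fun s _ => mul_le_mul_of_nonneg_right ?_ (Complex.normSq_nonneg _)
        exact prod_le_prod (fun i _ => hd _)
          fun i _ => hanti (Fin.le_def.2 (Fin.val_le_val_of_strictMono s.2 i))
    _ = ∏ i : Fin m, d (Fin.castLE hmn i) := by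
        rw [← mul_sum, sum_normSq_det_submatrix_eq_one hM, mul_one]

theorem conjTranspose_submatrix_mul_submatrix_eq_one {α ι κ : Type*} [NonAssocSemiring α]
    [Star α] [Fintype ι] [DecidableEq ι] [DecidableEq κ] {V : Matrix ι ι α}
    (hV : Vᴴ * V = 1) {f : κ → ι} (hf : Function.Injective f) :
    (V.submatrix id f)ᴴ * V.submatrix id f = 1 := by
  rw [conjTranspose_submatrix, ← submatrix_mul _ _ _ _ _ Function.bijective_id, hV,
    submatrix_one _ hf]

theorem PosDef.pos_of_conj_eq_diagonal {n : ℕ} {σ w : Matrix (Fin n) (Fin n) ℂ}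
    {q : Fin n → ℝ} (hσ : σ.PosDef) (hw : IsUnit w)
    (hwσ : star w * σ * w = diagonal (fun i => (q i : ℂ))) (i : Fin n) : 0 < q i := by
  have h := (IsUnit.posDef_star_left_conjugate_iff hw).2 hσ
  rw [hwσ, posDef_diagonal_iff] at h
  exact_mod_cast h i

end Matrix

theorem prim_diagonal {n : ℕ} (d : Fin n → ℂ) (k : ℕ) (hk : k ≤ n) :
    prim (diagonal d) k hk = ∏ i : Fin k, d (Fin.castLE hk i) := by
  rw [prim, submatrix_diagonal _ _ (Fin.castLE_injective hk), det_diagonal]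
  rfl

theorem exists_isometry_prim_conj_eq {n : ℕ} {σ w u : Matrix (Fin n) (Fin n) ℂ}
    {q : Fin n → ℝ} (hw : w ∈ unitaryGroup (Fin n) ℂ) (hu : u ∈ unitaryGroup (Fin n) ℂ)
    (hwσ : star w * σ * w = diagonal (fun i => (q i : ℂ))) (k : ℕ) (hk : k ≤ n) :
    ∃ M : Matrix (Fin n) (Fin k) ℂ, Mᴴ * M = 1 ∧
      prim (star u * σ * u) k hk = (Mᴴ * diagonal (fun i => (q i : ℂ)) * M).det := by
  set V := star w * u
  have hV : Vᴴ * V = 1 := mem_unitaryGroup_iff'.1 (mul_mem (Unitary.star_mem hw) hu)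
  have hconj : star u * σ * u = Vᴴ * diagonal (fun i => (q i : ℂ)) * V := by
    have hw' : w * star w = 1 := mem_unitaryGroup_iff.1 hw
    calc star u * σ * u = star u * (w * star w) * σ * (w * star w) * u := by
          rw [hw', Matrix.mul_one, Matrix.mul_one]
      _ = Vᴴ * (star w * σ * w) * V := by
          simp only [V, ← star_eq_conjTranspose, star_mul, star_star, Matrix.mul_assoc]
      _ = Vᴴ * diagonal (fun i => (q i : ℂ)) * V := by rw [hwσ]
  refine ⟨V.submatrix id (Fin.castLE hk),
    conjTranspose_submatrix_mul_submatrix_eq_one hV (Fin.castLE_injective hk), ?_⟩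
  rw [prim, hconj, submatrix_mul _ _ _ _ _ Function.bijective_id,
    submatrix_mul _ _ _ _ _ Function.bijective_id, conjTranspose_submatrix]
  rfl

theorem Finset.sum_range_sub_mul_sum_range_succ {R : Type*} [CommRing R] (g f : ℕ → R)
    (m : ℕ) :
    ∑ k ∈ range m, (g k - g (k + 1)) * ∑ j ∈ range (k + 1), f j =
      ∑ k ∈ range m, g k * f k - g m * ∑ j ∈ range m, f j := by
  induction m with
  | zero => simp
  | succ m ih =>
    rw [sum_range_succ, ih, sum_range_succ (fun k => g k * f k), sum_range_succ f]
    ring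

theorem pnext_le {n : ℕ} {p : Fin n → ℝ} (hp0 : ∀ k, 0 ≤ p k) (hp : Antitone p)
    (k : Fin n) : pnext p k ≤ p k := by
  unfold pnext
  split_ifs
  · exact hp (Fin.le_def.2 (Nat.le_succ _))
  · exact hp0 k

theorem sum_sub_pnext_mul_sum_castLE {n : ℕ} (p f : Fin n → ℝ) :
    ∑ k : Fin n, (p k - pnext p k) * ∑ i : Fin (k + 1), f (Fin.castLE k.isLt i) =
      ∑ k, p k * f k := by
  let P : ℕ → ℝ := fun j => if h : j < n then p ⟨j, h⟩ else 0
  let F : ℕ → ℝ := fun j => if h : j < n then f ⟨j, h⟩ else 0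
  have hP : ∀ k : Fin n, P k = p k := fun k => dif_pos k.isLt
  have hF : ∀ k : Fin n, F k = f k := fun k => dif_pos k.isLt
  have hpnext : ∀ k : Fin n, pnext p k = P (k + 1) := fun k => rfl
  have hpartial : ∀ k : Fin n,
      ∑ i : Fin (k + 1), f (Fin.castLE k.isLt i) = ∑ j ∈ range (k + 1), F j := fun k => by
    rw [← Fin.sum_univ_eq_sum_range]
    exact sum_congr rfl fun i _ => (hF _).symm
  calc _ = ∑ k ∈ range n, (P k - P (k + 1)) * ∑ j ∈ range (k + 1), F j := by
        rw [← Fin.sum_univ_eq_sum_range]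
        exact sum_congr rfl fun k _ => by rw [hP, hpnext, hpartial]
    _ = ∑ k ∈ range n, P k * F k := by
        rw [sum_range_sub_mul_sum_range_succ]
        simp [P]
    _ = _ := by
        rw [← Fin.sum_univ_eq_sum_range]
        exact sum_congr rfl fun k _ => by rw [hP, hF]

theorem sum_mul_log_sub_pnext_mul_log_prod_eq {n : ℕ} (p : Fin n → ℝ) {q : Fin n → ℝ}
    (hq : ∀ i, q i ≠ 0) :
    ∑ k : Fin n, (p k * Real.log (p k) -
      (p k - pnext p k) * Real.log (∏ i : Fin (k + 1), q (Fin.castLE k.isLt i))) =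
      ∑ k, p k * Real.log (p k / q k) := by
  simp only [Real.log_prod fun i _ => hq _]
  rw [sum_sub_distrib, sum_sub_pnext_mul_sum_castLE p fun i => Real.log (q i), ← sum_sub_distrib]
  refine sum_congr rfl fun k _ => ?_
  rcases eq_or_ne (p k) 0 with h | h
  · simp [h]
  · rw [Real.log_div h (hq k), mul_sub]

theorem stmt_17_general {n : ℕ} (σ : Matrix (Fin n) (Fin n) ℂ) (hσ : σ.PosDef)
    (q : Fin n → ℝ) (hq : Antitone q)
    (hdiag : ∃ w ∈ Matrix.unitaryGroup (Fin n) ℂ,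
      star w * σ * w = Matrix.diagonal (fun i => (q i : ℂ)))
    (p : Fin n → ℝ) (hp0 : ∀ k, 0 ≤ p k) (hp : Antitone p) :
    (⨅ u : Matrix.unitaryGroup (Fin n) ℂ, keylRate σ p (u : Matrix (Fin n) (Fin n) ℂ)) =
      ∑ k, p k * Real.log (p k / q k) := by
  obtain ⟨w, hw, hwσ⟩ := hdiag
  have hq0 : ∀ i, 0 < q i :=
    hσ.pos_of_conj_eq_diagonal (Unitary.isUnit_coe (U := ⟨w, hw⟩)) hwσ
  have hlow : ∀ u : unitaryGroup (Fin n) ℂ,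
      ∑ k : Fin n, (p k * Real.log (p k) - (p k - pnext p k) *
        Real.log (∏ i : Fin (k + 1), q (Fin.castLE k.isLt i))) ≤ keylRate σ p u := by
    intro u
    refine sum_le_sum fun k _ => sub_le_sub_left
      (mul_le_mul_of_nonneg_left ?_ (sub_nonneg.2 (pnext_le hp0 hp k))) _
    obtain ⟨M, hM, hprim⟩ := exists_isometry_prim_conj_eq hw u.2 hwσ (k + 1) k.isLt
    rw [hprim]
    exact Real.log_le_log (re_det_conjTranspose_mul_diagonal_mul_pos hq0 hM)
      (re_det_conjTranspose_mul_diagonal_mul_le (fun i => (hq0 i).le) hq k.isLt hM)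
  have hmin : keylRate σ p w = ∑ k : Fin n, (p k * Real.log (p k) - (p k - pnext p k) *
      Real.log (∏ i : Fin (k + 1), q (Fin.castLE k.isLt i))) := by
    simp only [keylRate, hwσ, prim_diagonal, ← Complex.ofReal_prod, Complex.ofReal_re]
  rw [← sum_mul_log_sub_pnext_mul_log_prod_eq p fun i => (hq0 i).ne']
  exact le_antisymm ((ciInf_le ⟨_, Set.forall_mem_range.2 hlow⟩ ⟨w, hw⟩).trans_eq hmin)
    (le_ciInf hlow)

/-- For a positive definite unit-trace `σ` with decreasing eigenvalue
vector `q` and a decreasing probability vector `p`,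
`inf_{u ∈ U(n)} I(u diag(p) u† ‖ σ) = D_KL(p‖q)`. -/
theorem stmt_17 {n : ℕ} (σ : Matrix (Fin n) (Fin n) ℂ) (hσ : σ.PosDef)
    (htr : σ.trace = 1) (q : Fin n → ℝ) (hq : Antitone q)
    (hdiag : ∃ w ∈ Matrix.unitaryGroup (Fin n) ℂ,
      star w * σ * w = Matrix.diagonal (fun i => (q i : ℂ)))
    (p : Fin n → ℝ) (hp0 : ∀ k, 0 ≤ p k) (hp1 : ∑ k, p k = 1) (hp : Antitone p) :
    (⨅ u : Matrix.unitaryGroup (Fin n) ℂ, keylRate σ p (u : Matrix (Fin n) (Fin n) ℂ)) =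
      ∑ k, p k * Real.log (p k / q k) :=
  stmt_17_general σ hσ q hq hdiag p hp0 hp
end

section
/- Let f : [0,1] → ℂ be smooth with f(0) = 1, f'(0) = 0, f''(0) = -a for some a ≥ 0, and |f'''(t)| ≤ B for all t ∈ [0,1]. If |f(t) − 1| ≤ 1/2 for all t ∈ [0,1], then f(1) = exp(−a/2 + R) with |R| ≤ C·(a² + B) for an absolute constant C, where exp uses the principal branch of the logarithm. In particular, |f(1)| ≤ e^{−a/2 + C(a²+B)}. -/
/-- For globally smooth functions, iterated derivatives within `Icc 0 1` agree with
global iterated derivatives at points of the interval. -/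
lemma stmt19_itDW {f : ℝ → ℂ} (hf : ContDiff ℝ (⊤ : ℕ∞) f) (m : ℕ) {x : ℝ}
    (hx : x ∈ Set.Icc (0 : ℝ) 1) :
    iteratedDerivWithin m f (Set.Icc 0 1) x = iteratedDeriv m f x := by
  have h1 : HasFTaylorSeriesUpToOn ((⊤ : ℕ∞) : WithTop ℕ∞) f (ftaylorSeriesWithin ℝ f Set.univ)
      (Set.Icc (0 : ℝ) 1) :=
    ((contDiffOn_univ.mpr hf).ftaylorSeriesWithin uniqueDiffOn_univ).mono (Set.subset_univ _)
  have h2 := h1.eq_iteratedFDerivWithin_of_uniqueDiffOn (m := m) (by exact_mod_cast (le_top : (m : ℕ∞) ≤ ⊤))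
    (uniqueDiffOn_Icc one_pos) hx
  rw [iteratedDerivWithin, iteratedDeriv, ← h2]
  simp [ftaylorSeriesWithin, iteratedFDerivWithin_univ]

/-- There is an absolute constant `C` such that for any smooth
`f : ℝ → ℂ` with `f(0) = 1`, `f'(0) = 0`, `f''(0) = -a` (`a ≥ 0`), `|f'''(t)| ≤ B` on
`[0,1]`, and `|f(t) − 1| ≤ 1/2` on `[0,1]`, one has `f(1) = exp(−a/2 + R)` with
`|R| ≤ C (a² + B)`; in particular `|f(1)| ≤ e^{−a/2 + C(a²+B)}`. -/
theorem stmt_19 :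
    ∃ C : ℝ, 0 < C ∧
      ∀ (f : ℝ → ℂ) (a B : ℝ), ContDiff ℝ (⊤ : ℕ∞) f → f 0 = 1 → deriv f 0 = 0 →
        0 ≤ a → iteratedDeriv 2 f 0 = -(a : ℂ) →
        (∀ t ∈ Set.Icc (0 : ℝ) 1, ‖iteratedDeriv 3 f t‖ ≤ B) →
        (∀ t ∈ Set.Icc (0 : ℝ) 1, ‖f t - 1‖ ≤ 1 / 2) →
        ∃ R : ℂ, f 1 = Complex.exp (-(a : ℂ) / 2 + R) ∧
          ‖R‖ ≤ C * (a ^ 2 + B) ∧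
          ‖f 1‖ ≤ Real.exp (-a / 2 + C * (a ^ 2 + B)) := by
  refine ⟨2, by norm_num, ?_⟩
  intro f a B hf hf0 hf'0 ha hf''0 hf''' hnear
  have hB0 : 0 ≤ B := le_trans (norm_nonneg _) (hf''' 0 (by norm_num))
  have h1mem : (1 : ℝ) ∈ Set.Icc (0 : ℝ) 1 := by norm_num
  have hdist : ‖f 1 - 1‖ ≤ 1 / 2 := hnear 1 h1mem
  have hne : f 1 ≠ 0 := by
    intro h
    rw [h] at hdist
    norm_num at hdist
  -- f 1 = exp (Log (f 1))
  set L := Complex.log (f 1) with hL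
  have hexp : f 1 = Complex.exp (-(a : ℂ) / 2 + (L + (a : ℂ) / 2)) := by
    rw [show -(a : ℂ) / 2 + (L + (a : ℂ) / 2) = L by ring, hL, Complex.exp_log hne]
  -- log of something near 1
  have hlog1 : ‖Complex.log (1 + (f 1 - 1)) - (f 1 - 1)‖ ≤
      ‖f 1 - 1‖ ^ 2 * (1 - ‖f 1 - 1‖)⁻¹ / 2 :=
    Complex.norm_log_one_add_sub_self_le (lt_of_le_of_lt hdist (by norm_num))
  have h1p : (1 : ℂ) + (f 1 - 1) = f 1 := by ring
  rw [h1p] at hlog1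
  have hinv : (1 - ‖f 1 - 1‖)⁻¹ ≤ 2 := by
    rw [inv_le_comm₀ (by linarith) (by norm_num)]
    linarith
  have hlogsub : ‖L - (f 1 - 1)‖ ≤ ‖f 1 - 1‖ ^ 2 := by
    calc ‖L - (f 1 - 1)‖ ≤ ‖f 1 - 1‖ ^ 2 * (1 - ‖f 1 - 1‖)⁻¹ / 2 := hlog1
    _ ≤ ‖f 1 - 1‖ ^ 2 * 2 / 2 := by gcongr
    _ = ‖f 1 - 1‖ ^ 2 := by ring
  have hRbound : ‖L + (a : ℂ) / 2‖ ≤ 2 * (a ^ 2 + B) := by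
    rcases le_or_gt 1 (a ^ 2 + B) with hbig | hsmall
    · -- trivial case: ‖L‖ ≤ 3/4, a/2 ≤ (1+a²)/4
      have hLnorm : ‖L‖ ≤ 3 / 4 := by
        have := Complex.norm_log_one_add_half_le_self (z := f 1 - 1) hdist
        rw [h1p] at this
        calc ‖L‖ ≤ 3 / 2 * ‖f 1 - 1‖ := this
        _ ≤ 3 / 2 * (1 / 2) := by gcongr
        _ = 3 / 4 := by norm_num
      have hnormA : ‖(a : ℂ) / 2‖ = a / 2 := by
        rw [norm_div, Complex.norm_real, Real.norm_eq_abs, abs_of_nonneg ha]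
        norm_num
      have : ‖L + (a : ℂ) / 2‖ ≤ ‖L‖ + a / 2 := by
        refine le_trans (norm_add_le _ _) ?_
        rw [hnormA]
      nlinarith [sq_nonneg (a - 1)]
    · -- small case: Taylor expansion
      have ha1 : a ≤ 1 := by nlinarith
      have hB1 : B ≤ 1 := by nlinarith
      -- Taylor's theorem with remainder bound
      have hfC : ContDiffOn ℝ (2 + 1) f (Set.Icc (0 : ℝ) 1) :=
        (hf.of_le (WithTop.coe_le_coe.mpr le_top)).contDiffOn
      have hbound : ∀ y ∈ Set.Icc (0 : ℝ) 1,
          ‖iteratedDerivWithin (2 + 1) f (Set.Icc (0 : ℝ) 1) y‖ ≤ B := by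
        intro y hy
        rw [stmt19_itDW hf 3 hy]
        exact hf''' y hy
      have htaylor := taylor_mean_remainder_bound (f := f) (n := 2) zero_le_one hfC h1mem hbound
      have h0mem : (0 : ℝ) ∈ Set.Icc (0 : ℝ) 1 := by norm_num
      have hTval : taylorWithinEval f 2 (Set.Icc (0 : ℝ) 1) 0 1 = 1 - (a : ℂ) / 2 := by
        rw [show (2 : ℕ) = 1 + 1 from rfl, taylorWithinEval_succ, taylorWithinEval_succ,
          taylor_within_zero_eval]
        rw [stmt19_itDW hf 2 h0mem, hf''0]
        have h1d : iteratedDerivWithin (0 + 1) f (Set.Icc (0 : ℝ) 1) 0 = 0 := by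
          rw [stmt19_itDW hf 1 h0mem, iteratedDeriv_one, hf'0]
        rw [h1d, hf0]
        norm_num
        push_cast
        ring
      rw [hTval] at htaylor
      have htay : ‖f 1 - 1 + (a : ℂ) / 2‖ ≤ B / 2 := by
        have : f 1 - (1 - (a : ℂ) / 2) = f 1 - 1 + (a : ℂ) / 2 := by ring
        rw [this] at htaylor
        norm_num [Nat.factorial] at htaylor
        convert htaylor using 1 <;> ring_nf
      have hf1near : ‖f 1 - 1‖ ≤ a / 2 + B / 2 := by
        have : f 1 - 1 = (f 1 - 1 + (a : ℂ) / 2) - (a : ℂ) / 2 := by ring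
        rw [this]
        refine le_trans (norm_sub_le _ _) ?_
        have : ‖(a : ℂ) / 2‖ = a / 2 := by
          rw [norm_div, Complex.norm_real, Real.norm_eq_abs, abs_of_nonneg ha]
          norm_num
        rw [this]
        linarith
      have hRdecomp : L + (a : ℂ) / 2 = (L - (f 1 - 1)) + (f 1 - 1 + (a : ℂ) / 2) := by ring
      rw [hRdecomp]
      refine le_trans (norm_add_le _ _) ?_
      have hsq : ‖f 1 - 1‖ ^ 2 ≤ (a / 2 + B / 2) ^ 2 := by
        apply pow_le_pow_left₀ (norm_nonneg _) hf1near
      nlinarith [hlogsub, htay, sq_nonneg (a - B), sq_nonneg a, norm_nonneg (f 1 - 1)]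
  refine ⟨L + (a : ℂ) / 2, hexp, hRbound, ?_⟩
  rw [hexp, Complex.norm_exp]
  apply Real.exp_le_exp.mpr
  have hre : (-(a : ℂ) / 2 + (L + (a : ℂ) / 2)).re = -a / 2 + (L + (a : ℂ) / 2).re := by
    simp
  rw [hre]
  have hre2 : (L + (a : ℂ) / 2).re ≤ ‖L + (a : ℂ) / 2‖ := Complex.re_le_norm _
  linarith
end
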